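/- Let ℓ ≥ 2 and a be natural numbers with 2 ≤ a ≤ ℓ, let m ≥ 2 and r ≥ 0 be natural numbers, and let ε be a real number with 0 ≤ ε ≤ (a−1)/(ℓ−1). Let f be a uniformly random function from a set of r labelled positions to a set of m labelled values, let |𝒱| be the cardinality of the image of f, and set P_miss := ε·(m − |𝒱|)/m. Then E[ BinoTail(ℓ, a, P_miss) ] ≥ BinoTail(ℓ, a, ε·(1 − 1/m)^r). (Paper's Lemma 3; the paper states the hypothesis as ε ≤ a/ℓ, and the convexity needed for Jensen's inequality holds on [0,(a−1)/(ℓ−1)].) -/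

import Mathlib

open Finset

/-- `binoTail ℓ a p = Σ_{j=a}^{ℓ} C(ℓ,j) p^j (1−p)^{ℓ−j}`, the probability mass
in the right tail of a Binomial(ℓ,p) distribution. -/
noncomputable def binoTail (ℓ a : ℕ) (p : ℝ) : ℝ :=
  ∑ j ∈ Finset.Icc a ℓ, (ℓ.choose j : ℝ) * p ^ j * (1 - p) ^ (ℓ - j)

/-!
Writing `binoTail ℓ a` as a sum of Bernstein polynomials, its derivative telescopes to
`ℓ · C(ℓ-1, a-1) · p^(a-1) (1-p)^(ℓ-a)`, and `p^(a-1) (1-p)^(ℓ-a)` increases up to its maximum at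
`p = (a-1)/(ℓ-1)`; so the tail is convex on `[0, (a-1)/(ℓ-1)]`. Every `P_miss` lies in `[0, ε]`,
inside that interval. Each value is missed by exactly `(m-1)^r` of the `m^r` functions, so the
mean of `P_miss` is `ε (1 - 1/m)^r`, and Jensen's inequality concludes.
-/

open Polynomial

lemma binoTail_eq_eval (ℓ a : ℕ) (p : ℝ) :
    binoTail ℓ a p = (∑ j ∈ Icc a ℓ, bernsteinPolynomial ℝ ℓ j).eval p := by
  simp [binoTail, bernsteinPolynomial, eval_finsetSum]

lemma derivative_sum_Icc_bernsteinPolynomial {R : Type*} [CommRing R] {k n : ℕ} (hkn : k ≤ n) :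
    derivative (∑ j ∈ Icc (k + 1) (n + 1), bernsteinPolynomial R (n + 1) j)
      = (n + 1) * bernsteinPolynomial R n k := by
  rw [← image_add_right_Icc k n 1, sum_image (by simp), derivative_sum]
  simp_rw [bernsteinPolynomial.derivative_succ_aux, ← mul_sum]
  have h := sum_Icc_sub hkn (fun j => -bernsteinPolynomial R n j)
  simp only [bernsteinPolynomial.eq_zero_of_lt R n.lt_succ_self, neg_zero, sub_neg_eq_add,
    zero_add, neg_add_eq_sub] at h
  rw [h]

lemma hasDerivAt_binoTail {k n : ℕ} (hkn : k ≤ n) (p : ℝ) :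
    HasDerivAt (binoTail (n + 1) (k + 1))
      ((n + 1) * (n.choose k * p ^ k * (1 - p) ^ (n - k))) p := by
  have h := (∑ j ∈ Icc (k + 1) (n + 1), bernsteinPolynomial ℝ (n + 1) j).hasDerivAt p
  rw [derivative_sum_Icc_bernsteinPolynomial hkn] at h
  rw [show binoTail (n + 1) (k + 1) = _ from funext (binoTail_eq_eval _ _)]
  refine h.congr_deriv ?_
  simp [bernsteinPolynomial]

lemma monotoneOn_pow_mul_one_sub_pow (k n : ℕ) :
    MonotoneOn (fun p : ℝ => p ^ (k + 1) * (1 - p) ^ n) (Set.Icc 0 ((k + 1) / (k + 1 + n))) := by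
  cases n with
  | zero =>
    simp only [pow_zero, mul_one]
    exact fun x hx y _ hxy => pow_le_pow_left₀ hx.1 hxy _
  | succ n =>
    have hderiv (p : ℝ) : HasDerivAt (fun p : ℝ => p ^ (k + 1) * (1 - p) ^ (n + 1))
        (p ^ k * (1 - p) ^ n * ((k + 1) - (k + 1 + (n + 1 : ℕ)) * p)) p := by
      have := (hasDerivAt_pow (k + 1) p).fun_mul ((hasDerivAt_pow (n + 1) (1 - p)).comp p
        ((hasDerivAt_id p).const_sub 1))
      refine this.congr_deriv ?_
      simp only [Function.comp_apply, Nat.add_sub_cancel]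
      push_cast
      ring
    refine monotoneOn_of_hasDerivWithinAt_nonneg (convex_Icc _ _) (by fun_prop)
      (fun p _ => (hderiv p).hasDerivWithinAt) (fun p hp => ?_)
    rw [interior_Icc] at hp
    obtain ⟨hp0, hpt⟩ := hp
    rw [lt_div_iff₀ (by positivity)] at hpt
    have hp1 : 0 ≤ 1 - p := by push_cast at hpt; nlinarith
    have hfactor : 0 ≤ (k + 1) - (k + 1 + (n + 1 : ℕ)) * p := by linarith
    positivity

lemma convexOn_binoTail {ℓ a : ℕ} (ha : 2 ≤ a) (haℓ : a ≤ ℓ) :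
    ConvexOn ℝ (Set.Icc 0 (((a : ℝ) - 1) / ((ℓ : ℝ) - 1))) (binoTail ℓ a) := by
  obtain ⟨k, rfl⟩ : ∃ k, a = k + 1 + 1 := ⟨a - 2, by omega⟩
  obtain ⟨n, rfl⟩ : ∃ n, ℓ = k + 1 + n + 1 := ⟨ℓ - (k + 2), by omega⟩
  have hI : (((k + 1 + 1 : ℕ) : ℝ) - 1) / ((k + 1 + n + 1 : ℕ) - 1) = (k + 1) / (k + 1 + n) := by
    push_cast; ring_nf
  set c : ℝ := (k + 1 + n + 1 : ℕ) * (k + 1 + n).choose (k + 1)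
  have hderiv : deriv (binoTail (k + 1 + n + 1) (k + 1 + 1))
      = fun p => c * (p ^ (k + 1) * (1 - p) ^ n) := by
    funext p
    rw [(hasDerivAt_binoTail (by omega) p).deriv, Nat.add_sub_cancel_left]
    simp only [c]
    push_cast
    ring
  have hmono := monotoneOn_pow_mul_one_sub_pow k n
  rw [hI]
  refine MonotoneOn.convexOn_of_deriv (convex_Icc _ _) ?_ ?_ ?_
  · exact fun p _ => (hasDerivAt_binoTail (by omega) p).continuousAt.continuousWithinAt
  · exact fun p _ => (hasDerivAt_binoTail (by omega) p).differentiableAt.differentiableWithinAt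
  · rw [hderiv]
    exact fun x hx y hy hxy => mul_le_mul_of_nonneg_left
      (hmono (interior_subset hx) (interior_subset hy) hxy) (by positivity)

lemma ConvexOn.map_sum_div_card_le {ι : Type*} {t : Finset ι} {s : Set ℝ} {p : ι → ℝ}
    {f : ℝ → ℝ} (hf : ConvexOn ℝ s f) (ht : t.Nonempty) (hp : ∀ i ∈ t, p i ∈ s) :
    f ((∑ i ∈ t, p i) / #t) ≤ (∑ i ∈ t, f (p i)) / #t := by
  have hcard : (0 : ℝ) < #t := by exact_mod_cast ht.card_pos
  have h := hf.map_sum_le (w := fun _ => (#t : ℝ)⁻¹) (fun _ _ => by positivity)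
    (by simp [hcard.ne']) hp
  simp only [smul_eq_mul] at h
  rwa [← mul_sum, ← mul_sum, inv_mul_eq_div, inv_mul_eq_div] at h

lemma sum_card_compl_image {α β : Type*} [Fintype α] [DecidableEq α] [Fintype β] [DecidableEq β] :
    ∑ f : α → β, #(univ.image f)ᶜ = Fintype.card β * (Fintype.card β - 1) ^ Fintype.card α := by
  have hmiss (v : β) : #{f : α → β | v ∉ univ.image f} = (Fintype.card β - 1) ^ Fintype.card α := by
    have hfilter : ({f : α → β | v ∉ univ.image f} : Finset _)
        = Fintype.piFinset fun _ => univ.erase v := by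
      ext f
      simp [eq_comm]
    rw [hfilter, Fintype.card_piFinset, prod_const, card_erase_of_mem (mem_univ v), card_univ,
      card_univ]
  calc ∑ f : α → β, #(univ.image f)ᶜ
      = ∑ f : α → β, ∑ v : β, if v ∉ univ.image f then 1 else 0 := by
        refine sum_congr rfl fun f _ => ?_
        rw [sum_boole, Nat.cast_id]
        congr 1
        ext
        simp
    _ = ∑ v : β, #{f : α → β | v ∉ univ.image f} := by
        rw [sum_comm]
        simp only [sum_boole, Nat.cast_id]
    _ = _ := by simp only [hmiss, sum_const, card_univ, smul_eq_mul]

theorem expected_binoTail_ge_general (ℓ a m r : ℕ) (ha : 2 ≤ a) (haℓ : a ≤ ℓ)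
    (hm : 2 ≤ m) (ε : ℝ) (hε0 : 0 ≤ ε) (hε1 : ε ≤ ((a : ℝ) - 1) / ((ℓ : ℝ) - 1)) :
    (∑ f : Fin r → Fin m,
        binoTail ℓ a (ε * ((m : ℝ) - ((Finset.image f Finset.univ).card : ℝ)) / (m : ℝ)))
      / (m : ℝ) ^ r
      ≥ binoTail ℓ a (ε * (1 - 1 / (m : ℝ)) ^ r) := by
  have hm0 : (0 : ℝ) < m := by positivity
  have : NeZero m := ⟨by omega⟩
  have hmiss (f : Fin r → Fin m) : (m : ℝ) - #(univ.image f) = #(univ.image f)ᶜ := by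
    rw [card_compl, Nat.cast_sub (card_le_univ _), Fintype.card_fin]
  simp_rw [hmiss]
  set z : (Fin r → Fin m) → ℝ := fun f => ε * #(univ.image f)ᶜ / m
  have hz (f : Fin r → Fin m) : z f ∈ Set.Icc 0 (((a : ℝ) - 1) / ((ℓ : ℝ) - 1)) := by
    have hc : (#(univ.image f)ᶜ : ℝ) ≤ m := by
      exact_mod_cast (card_le_univ _).trans_eq (Fintype.card_fin m)
    exact ⟨by positivity, (div_le_of_le_mul₀ hm0.le hε0 (by nlinarith)).trans hε1⟩
  have hmean : (∑ f, z f) / #(univ : Finset (Fin r → Fin m)) = ε * (1 - 1 / (m : ℝ)) ^ r := by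
    have hsum := congrArg (Nat.cast (R := ℝ)) (sum_card_compl_image (α := Fin r) (β := Fin m))
    push_cast [Fintype.card_fin, Nat.cast_sub (by omega : 1 ≤ m)] at hsum
    simp only [z, mul_div_assoc, ← mul_sum, ← sum_div, hsum, card_univ, Fintype.card_fun,
      Fintype.card_fin]
    rw [one_sub_div hm0.ne', div_pow]
    push_cast
    field_simp
  have h := (convexOn_binoTail ha haℓ).map_sum_div_card_le univ_nonempty fun f _ => hz f
  rwa [hmean, card_univ, Fintype.card_fun, Fintype.card_fin, Fintype.card_fin, Nat.cast_pow] at h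

/-- **Paper's Lemma 3.**  For a uniformly random function `f : [r] → [m]`,
with `|𝒱|` the cardinality of the image of `f` and
`P_miss := ε·(m − |𝒱|)/m`, one has
`E[ BinoTail(ℓ, a, P_miss) ] ≥ BinoTail(ℓ, a, ε·(1 − 1/m)^r)`,
provided `2 ≤ a ≤ ℓ` and `0 ≤ ε ≤ (a−1)/(ℓ−1)`. -/
theorem expected_binoTail_ge (ℓ a m r : ℕ) (hℓ : 2 ≤ ℓ) (ha : 2 ≤ a) (haℓ : a ≤ ℓ)
    (hm : 2 ≤ m) (ε : ℝ) (hε0 : 0 ≤ ε) (hε1 : ε ≤ ((a : ℝ) - 1) / ((ℓ : ℝ) - 1)) :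
    (∑ f : Fin r → Fin m,
        binoTail ℓ a (ε * ((m : ℝ) - ((Finset.image f Finset.univ).card : ℝ)) / (m : ℝ)))
      / (m : ℝ) ^ r
      ≥ binoTail ℓ a (ε * (1 - 1 / (m : ℝ)) ^ r) :=
  expected_binoTail_ge_general ℓ a m r ha haℓ hm ε hε0 hε1
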